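/- Let A be an associative ℕ-graded algebra over R with a bi-symplectic form ω of weight j ≠ 0. Then: (i) ω is exact in the Karoubi–de Rham complex, namely jω = d(i_Eu ω) where Eu is the Euler derivation; and (ii) any bi-symplectic double derivation Θ of weight l with j + l ≠ 0 is Hamiltonian: ι_Θ ω = (1/(l+j)) d(i_Eu ι_Θ ω). -/
import Mathlib

/-!
STATEMENT 16: Let `ω` be a bi-symplectic form of weight `j ≠ 0` on an
associative ℕ-algebra `A` over `R`.  Then (i) `ω` is exact:
`jω = d(i_Eu ω)`; and (ii) any bi-symplectic double derivation `Θ` of weight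
`l` with `j + l ≠ 0` is Hamiltonian: `ι_Θω = (1/(l+j)) d(i_Eu ι_Θ ω)`.

We work in the (weight-graded) Karoubi–de Rham complex `DR`, encoded as a
graded `k`-module with differential `d`, the contraction `i_Eu` by the Euler
derivation satisfying the Cartan identity
`d ∘ i_Eu + i_Eu ∘ d = L_Eu = (weight)·id`, and the reduced contraction
`ι_Θ` of the double derivation `Θ` (of weight `l`); `Θ` bi-symplectic means
`ℒ_Θ ω = (d ∘ ι_Θ + ι_Θ ∘ d) ω = 0` (reduced Cartan identity).
-/

noncomputable section
namespace Stmt16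

theorem statement16
    (k : Type) [Field k] [CharZero k]
    (DR : Type) [AddCommGroup DR] [Module k DR]
    (Dw : ℤ → Submodule k DR)            -- weight grading
    (d : DR →ₗ[k] DR)                     -- Karoubi–de Rham differential
    (hd2 : ∀ α, d (d α) = 0)
    (iEu : DR →ₗ[k] DR)                   -- contraction with the Euler derivation
    -- `L_Eu = d ∘ i_Eu + i_Eu ∘ d` acts on the weight-`n` part as `n · id`
    (hLEu : ∀ (n : ℤ) (α : DR), α ∈ Dw n → d (iEu α) + iEu (d α) = (n : k) • α)
    -- the bi-symplectic form `ω`, of weight `j ≠ 0`, closed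
    (ω : DR) (j : ℤ) (hω : ω ∈ Dw j) (hj : j ≠ 0) (hclosed : d ω = 0)
    -- a bi-symplectic double derivation `Θ` of weight `l`, via its reduced
    -- contraction operator `ι_Θ`
    (ιΘ : DR →ₗ[k] DR) (l : ℤ)
    (hΘwt : ∀ (n : ℤ) (α : DR), α ∈ Dw n → ιΘ α ∈ Dw (n + l))
    (hbis : d (ιΘ ω) + ιΘ (d ω) = 0)     -- `ℒ_Θ ω = 0`
    (hjl : j + l ≠ 0) :
    -- (i) `ω` is exact: `jω = d(i_Eu ω)`;
    (j : k) • ω = d (iEu ω) ∧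
    -- (ii) `Θ` is Hamiltonian: `ι_Θ ω = (1/(l+j)) · d(i_Eu (ι_Θ ω))`.
    ιΘ ω = (((l + j : ℤ) : k))⁻¹ • d (iEu (ιΘ ω)) := by
  constructor
  · have h := hLEu j ω hω
    rw [hclosed, map_zero, add_zero] at h
    exact h.symm
  · have hmem : ιΘ ω ∈ Dw (j + l) := hΘwt j ω hω
    have hclosed' : d (ιΘ ω) = 0 := by
      rw [hclosed, map_zero, add_zero] at hbis; exact hbis
    have h := hLEu (j + l) (ιΘ ω) hmem
    rw [hclosed', map_zero, add_zero] at h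
    have hne : ((l + j : ℤ) : k) ≠ 0 := by
      simpa using (Int.cast_ne_zero (α := k)).mpr (by omega : (l + j : ℤ) ≠ 0)
    rw [h, smul_smul, show (j + l : ℤ) = (l + j : ℤ) by omega]
    rw [inv_mul_cancel₀ hne, one_smul]
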